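/- arXiv:2106.00335 — 2 statements merged into one kernel-verified Lean document; each statement's English description precedes it below -/
import Mathlib

section
/- Let p be an odd prime and let U_{p+1} be the group of upper unitriangular (p+1)×(p+1) matrices over ℤ/p. For b ∈ ℤ/p, let B = I + b·(E_{1,2}+E_{2,3}+...+E_{p-1,p}) + b'·E_{p,p+1} for some b' ∈ ℤ/p. Then B^p = I + c·E_{1,p+1} for some c ∈ ℤ/p (i.e., the p-th power of B lies in the subgroup I + E_{1,p+1}·ℤ/p). -/
/-!
In characteristic `p` the identity commutes with everything, so Frobenius gives
`(1 + N)^p = 1 + N^p`. The matrix `N` lives on the superdiagonal of a `(p+1) × (p+1)` matrix,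
so `N^p` is supported on the single entry `(0, p)`, with value the product of the superdiagonal.
-/

open Finset Matrix

namespace Matrix

variable {R : Type*} [CommSemiring R] {n : ℕ}

def superdiag (g : ℕ → R) : Matrix (Fin n) (Fin n) R :=
  of fun i j => if (j : ℕ) = i + 1 then g i else 0

theorem superdiag_pow_apply (g : ℕ → R) (k : ℕ) (i j : Fin n) :
    (superdiag g ^ k) i j = if (j : ℕ) = i + k then ∏ t ∈ range k, g (i + t) else 0 := by
  induction k generalizing j with
  | zero =>
    simp only [pow_zero, one_apply, range_zero, prod_empty, Nat.add_zero, Fin.ext_iff, eq_comm]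
  | succ k ih =>
    rw [pow_succ, mul_apply]
    simp only [ih]
    simp only [superdiag, of_apply]
    by_cases h : (j : ℕ) = i + (k + 1)
    · have hik : (i : ℕ) + k < n := by omega
      rw [Fintype.sum_eq_single ⟨i + k, hik⟩ fun l hl => by
          rw [if_neg fun hc => hl (Fin.ext hc), zero_mul],
        if_pos rfl, if_pos (by simp only; omega), if_pos h, prod_range_succ]
    · rw [if_neg h]
      refine sum_eq_zero fun l _ => ?_
      split_ifs <;> first | omega | simp only [zero_mul, mul_zero]

theorem superdiag_pow_self (g : ℕ → R) :
    (superdiag g : Matrix (Fin (n + 1)) (Fin (n + 1)) R) ^ n =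
      (∏ t ∈ range n, g t) • single 0 (Fin.last n) 1 := by
  ext i j
  rw [superdiag_pow_apply, smul_apply, single_apply, smul_ite, smul_eq_mul, mul_one, smul_zero]
  by_cases h : (j : ℕ) = i + n
  · have hi : i = 0 := Fin.ext (by simp only [Fin.val_zero]; omega)
    have hj : j = Fin.last n := Fin.ext (by simp [h, hi])
    simp [hi, hj]
  · have : ¬(0 = i ∧ Fin.last n = j) := by
      rintro ⟨rfl, rfl⟩
      simp at h
    rw [if_neg h, if_neg this]

end Matrix

theorem stmt11_general (p : ℕ) [Fact p.Prime] (b b' : ZMod p) :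
    let B : Matrix (Fin (p + 1)) (Fin (p + 1)) (ZMod p) :=
      1 + Matrix.of (fun (i j : Fin (p + 1)) =>
        if (j : ℕ) = (i : ℕ) + 1 then (if (i : ℕ) + 1 < p then b else b') else 0)
    ∃ c : ZMod p, B ^ p = 1 + c • Matrix.single 0 (Fin.last p) 1 := by
  intro B
  let g : ℕ → ZMod p := fun m => if m + 1 < p then b else b'
  have hB : B = 1 + superdiag g := rfl
  refine ⟨∏ t ∈ range p, g t, ?_⟩
  rw [hB, add_pow_char_of_commute p (Commute.one_left _), one_pow, superdiag_pow_self]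

/-- Let `p` be an odd prime and let
`B = I + b·(E_{1,2} + ⋯ + E_{p-1,p}) + b'·E_{p,p+1}` in the unitriangular group
`U_{p+1}` over `ℤ/p`. Then `B^p = I + c·E_{1,p+1}` for some `c ∈ ℤ/p`. -/
theorem stmt11 (p : ℕ) [Fact p.Prime] (hodd : Odd p) (b b' : ZMod p) :
    let B : Matrix (Fin (p + 1)) (Fin (p + 1)) (ZMod p) :=
      1 + Matrix.of (fun (i j : Fin (p + 1)) =>
        if (j : ℕ) = (i : ℕ) + 1 then (if (i : ℕ) + 1 < p then b else b') else 0)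
    ∃ c : ZMod p, B ^ p = 1 + c • Matrix.single 0 (Fin.last p) 1 :=
  stmt11_general p b b'
end

section
/- Let G be the pro-p group (p odd) with presentation G = ⟨x, y₀, ..., y_{d₁}, z₀, ..., z_{d₂} | r₁ = r₂ = 1⟩ where r₁ = y₀^p [y₀,x][y₁,y₂]⋯[y_{d₁-1},y_{d₁}] and r₂ = z₀^p [z₀,x][z₁,z₂]⋯[z_{d₂-1},z_{d₂}], with d₁, d₂ nonnegative even integers. If θ: G → 1+pℤₚ is a homomorphism such that for every choice of values on the generators (all but finitely many zero) there exists a 1-cocycle c: G → ℤₚ(θ) taking those values, then necessarily θ(x⁻¹) = 1-p and θ(yᵢ) = θ(zⱼ) = 1 for all i, j. -/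
section auxlemmas

variable {p : ℕ} [Fact p.Prime] {G : Type*} [Group G] {θ : G →* ℤ_[p]ˣ} {co : G → ℤ_[p]}

private lemma unit_cancel {u : ℤ_[p]ˣ} {v : ℤ_[p]} (h : (u : ℤ_[p]) * v = 0) : v = 0 :=
  (mul_eq_zero.mp h).resolve_left u.ne_zero

variable (hc : ∀ g₁ g₂ : G, co (g₁ * g₂) = co g₁ + (θ g₁ : ℤ_[p]) * co g₂)
include hc

private lemma aux_one : co (1 : G) = 0 := by
  have h := hc 1 1
  rw [mul_one, map_one, Units.val_one, one_mul] at h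
  exact left_eq_add.mp h

private lemma aux_lmul (g w' : G) :
    (θ g : ℤ_[p]) * co (g⁻¹ * w') = co w' - co g := by
  have h := hc g⁻¹ w'
  have i := hc g g⁻¹
  rw [mul_inv_cancel, aux_one hc] at i
  have j : (θ g : ℤ_[p]) * ((θ g⁻¹ : ℤ_[p]ˣ) : ℤ_[p]) = 1 := by
    rw [← Units.val_mul, ← map_mul, mul_inv_cancel, map_one, Units.val_one]
  linear_combination (θ g : ℤ_[p]) * h + co w' * j - i

private lemma aux_comm (g h' : G) :
    (θ g : ℤ_[p]) * (θ h' : ℤ_[p]) * co (g⁻¹ * h'⁻¹ * g * h') =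
      (1 - (θ h' : ℤ_[p])) * co g + ((θ g : ℤ_[p]) - 1) * co h' := by
  have e1 : g⁻¹ * h'⁻¹ * g * h' = g⁻¹ * (h'⁻¹ * (g * h')) := by group
  rw [e1]
  have a1 := aux_lmul hc g (h'⁻¹ * (g * h'))
  have a2 := aux_lmul hc h' (g * h')
  have a3 := hc g h'
  linear_combination (θ h' : ℤ_[p]) * a1 + a2 + a3

private lemma comm_zero {g h' : G} (hg : co g = 0) (hh : co h' = 0) :
    co (g⁻¹ * h'⁻¹ * g * h') = 0 := by
  have e := aux_comm hc g h'
  rw [hg, hh, mul_zero, mul_zero, add_zero, ← Units.val_mul] at e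
  exact unit_cancel e

private lemma aux_pow (g : G) (n : ℕ) :
    co (g ^ n) = (∑ i ∈ Finset.range n, (θ g : ℤ_[p]) ^ i) * co g := by
  induction n with
  | zero => simp [aux_one hc]
  | succ n ih =>
    rw [pow_succ, hc, ih, map_pow, Units.val_pow_eq_pow_val, Finset.sum_range_succ]
    ring

private lemma aux_prod_zero (f : ℕ → G) (n : ℕ) (h : ∀ j < n, co (f j) = 0) :
    co ((List.range n).map f).prod = 0 := by
  induction n with
  | zero => simpa using aux_one hc
  | succ n ih =>
    rw [List.range_succ, List.map_append, List.prod_append, List.map_cons, List.map_nil,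
      List.prod_cons, List.prod_nil, mul_one, hc,
      ih (fun j hj => h j (by omega)), h n (by omega), mul_zero, add_zero]

private lemma aux_prod_single (f : ℕ → G) :
    ∀ n k : ℕ, k < n → (∀ j < n, j ≠ k → co (f j) = 0) →
      co ((List.range n).map f).prod = 0 → co (f k) = 0 := by
  intro n
  induction n with
  | zero => intro k hk; omega
  | succ n ih =>
    intro k hk h hz
    rw [List.range_succ, List.map_append, List.prod_append, List.map_cons, List.map_nil,
      List.prod_cons, List.prod_nil, mul_one, hc] at hz
    rcases eq_or_lt_of_le (Nat.lt_succ_iff.mp hk) with hkn | hkn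
    · have hP : co ((List.range n).map f).prod = 0 :=
        aux_prod_zero hc f n (fun j hj => h j (by omega) (by omega))
      rw [hP, zero_add] at hz
      subst hkn
      exact unit_cancel hz
    · have hfn : co (f n) = 0 := h n (by omega) (by omega)
      rw [hfn, mul_zero, add_zero] at hz
      exact ih k hkn (fun j hj hj' => h j (by omega) hj') hz

end auxlemmas

private lemma main_lemma {p : ℕ} [Fact p.Prime] {G : Type*} [Group G] (d : ℕ) (hd : Even d)
    (x : G) (w : ℕ → G)
    (hr : w 0 ^ p * ((w 0)⁻¹ * x⁻¹ * w 0 * x) *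
      (((List.range (d / 2)).map (fun k =>
        (w (2 * k + 1))⁻¹ * (w (2 * k + 2))⁻¹ * w (2 * k + 1) * w (2 * k + 2))).prod) = 1)
    (θ : G →* ℤ_[p]ˣ)
    (hco : ∀ (a : ℤ_[p]) (b : ℕ → ℤ_[p]), ∃ co : G → ℤ_[p],
      (∀ g₁ g₂ : G, co (g₁ * g₂) = co g₁ + (θ g₁ : ℤ_[p]) * co g₂) ∧
      co x = a ∧ (∀ i ≤ d, co (w i) = b i)) :
    ((θ x⁻¹ : ℤ_[p]) = 1 - p) ∧ (∀ i ≤ d, θ (w i) = 1) := by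
  obtain ⟨m, hm⟩ := hd
  -- Step A : θ (w 0) = 1, using the cocycle with co x = 1, co (w i) = 0.
  have hu0 : θ (w 0) = 1 := by
    obtain ⟨c₁, hc₁, hx₁, hw₁⟩ := hco 1 (fun _ => 0)
    have E0 := hc₁ (w 0 ^ p * ((w 0)⁻¹ * x⁻¹ * w 0 * x))
      (((List.range (d / 2)).map (fun k =>
        (w (2 * k + 1))⁻¹ * (w (2 * k + 2))⁻¹ * w (2 * k + 1) * w (2 * k + 2))).prod)
    rw [hr, aux_one hc₁, hc₁] at E0
    have hP : c₁ (((List.range (d / 2)).map (fun k =>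
        (w (2 * k + 1))⁻¹ * (w (2 * k + 2))⁻¹ * w (2 * k + 1) * w (2 * k + 2))).prod) = 0 :=
      aux_prod_zero hc₁ _ _ (fun j hj =>
        comm_zero hc₁ (hw₁ _ (by omega)) (hw₁ _ (by omega)))
    have hpow : c₁ (w 0 ^ p) = 0 := by
      rw [aux_pow hc₁, hw₁ 0 (by omega), mul_zero]
    rw [hP, hpow, mul_zero, add_zero, zero_add] at E0
    have hA := unit_cancel E0.symm
    have e := aux_comm hc₁ (w 0) x
    rw [hA, hw₁ 0 (by omega), hx₁] at e
    have : (θ (w 0) : ℤ_[p]) = 1 := by linear_combination -e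
    exact Units.val_eq_one.mp this
  -- Step B : θ x⁻¹ = 1 - p, using the cocycle with co x = 0, co (w 0) = 1, others 0.
  have hxinv : ((θ x⁻¹ : ℤ_[p]ˣ) : ℤ_[p]) = 1 - p := by
    obtain ⟨c₂, hc₂, hx₂, hw₂⟩ := hco 0 (fun j => if j = 0 then 1 else 0)
    have hw20 : c₂ (w 0) = 1 := by rw [hw₂ 0 (by omega)]; exact if_pos rfl
    have E0 := hc₂ (w 0 ^ p * ((w 0)⁻¹ * x⁻¹ * w 0 * x))
      (((List.range (d / 2)).map (fun k =>
        (w (2 * k + 1))⁻¹ * (w (2 * k + 2))⁻¹ * w (2 * k + 1) * w (2 * k + 2))).prod)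
    rw [hr, aux_one hc₂, hc₂] at E0
    have hP : c₂ (((List.range (d / 2)).map (fun k =>
        (w (2 * k + 1))⁻¹ * (w (2 * k + 2))⁻¹ * w (2 * k + 1) * w (2 * k + 2))).prod) = 0 := by
      refine aux_prod_zero hc₂ _ _ (fun j hj => comm_zero hc₂ ?_ ?_) <;>
        · rw [hw₂ _ (by omega)]
          exact if_neg (by omega)
    have hpow : c₂ (w 0 ^ p) = (p : ℤ_[p]) := by
      rw [aux_pow hc₂, hu0, hw20]
      simp
    have hup : ((θ (w 0 ^ p) : ℤ_[p]ˣ) : ℤ_[p]) = 1 := by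
      rw [map_pow, hu0, one_pow, Units.val_one]
    rw [hP, hpow, mul_zero, add_zero, hup, one_mul] at E0
    have hA : c₂ ((w 0)⁻¹ * x⁻¹ * w 0 * x) = -(p : ℤ_[p]) := by linear_combination -E0
    have e := aux_comm hc₂ (w 0) x
    rw [hA, hw20, hx₂, hu0, Units.val_one] at e
    have j : ((θ x⁻¹ : ℤ_[p]ˣ) : ℤ_[p]) * ((θ x : ℤ_[p]ˣ) : ℤ_[p]) = 1 := by
      rw [← Units.val_mul, ← map_mul, inv_mul_cancel, map_one, Units.val_one]
    linear_combination (-((θ x⁻¹ : ℤ_[p]ˣ) : ℤ_[p])) * e + (1 - (p : ℤ_[p])) * j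
  refine ⟨hxinv, fun i hi => ?_⟩
  rcases Nat.eq_zero_or_pos i with rfl | hi0
  · exact hu0
  -- Step C : θ (w i) = 1 for 1 ≤ i ≤ d.
  rcases Nat.even_or_odd i with hie | hio
  · -- i even, i = 2k+2, use indicator at 2k+1
    obtain ⟨l, hl⟩ := hie
    set k : ℕ := i / 2 - 1 with hk
    have hik : i = 2 * k + 2 := by omega
    obtain ⟨c₃, hc₃, hx₃, hw₃⟩ := hco 0 (fun j => if j = 2 * k + 1 then 1 else 0)
    have E0 := hc₃ (w 0 ^ p * ((w 0)⁻¹ * x⁻¹ * w 0 * x))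
      (((List.range (d / 2)).map (fun k =>
        (w (2 * k + 1))⁻¹ * (w (2 * k + 2))⁻¹ * w (2 * k + 1) * w (2 * k + 2))).prod)
    rw [hr, aux_one hc₃, hc₃] at E0
    have hw30 : c₃ (w 0) = 0 := by
      rw [hw₃ 0 (by omega)]; exact if_neg (by omega)
    have hpow : c₃ (w 0 ^ p) = 0 := by rw [aux_pow hc₃, hw30, mul_zero]
    have hA : c₃ ((w 0)⁻¹ * x⁻¹ * w 0 * x) = 0 := comm_zero hc₃ hw30 hx₃
    rw [hpow, hA, mul_zero, add_zero, zero_add] at E0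
    have hP := unit_cancel E0.symm
    have hfk : c₃ ((w (2 * k + 1))⁻¹ * (w (2 * k + 2))⁻¹ * w (2 * k + 1) * w (2 * k + 2)) = 0 := by
      refine aux_prod_single hc₃
        (fun k => (w (2 * k + 1))⁻¹ * (w (2 * k + 2))⁻¹ * w (2 * k + 1) * w (2 * k + 2))
        (d / 2) k (by omega) (fun j hj hjk => comm_zero hc₃ ?_ ?_) hP <;>
        · rw [hw₃ _ (by omega)]
          exact if_neg (by omega)
    have e := aux_comm hc₃ (w (2 * k + 1)) (w (2 * k + 2))
    have h1 : c₃ (w (2 * k + 1)) = 1 := by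
      rw [hw₃ _ (by omega)]; exact if_pos rfl
    have h2 : c₃ (w (2 * k + 2)) = 0 := by
      rw [hw₃ _ (by omega)]; exact if_neg (by omega)
    rw [hfk, h1, h2] at e
    have : ((θ (w (2 * k + 2)) : ℤ_[p]ˣ) : ℤ_[p]) = 1 := by linear_combination e
    rw [hik]
    exact Units.val_eq_one.mp this
  · -- i odd, i = 2k+1, use indicator at 2k+2
    obtain ⟨l, hl⟩ := hio
    set k : ℕ := i / 2 with hk
    have hik : i = 2 * k + 1 := by omega
    obtain ⟨c₃, hc₃, hx₃, hw₃⟩ := hco 0 (fun j => if j = 2 * k + 2 then 1 else 0)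
    have E0 := hc₃ (w 0 ^ p * ((w 0)⁻¹ * x⁻¹ * w 0 * x))
      (((List.range (d / 2)).map (fun k =>
        (w (2 * k + 1))⁻¹ * (w (2 * k + 2))⁻¹ * w (2 * k + 1) * w (2 * k + 2))).prod)
    rw [hr, aux_one hc₃, hc₃] at E0
    have hw30 : c₃ (w 0) = 0 := by
      rw [hw₃ 0 (by omega)]; exact if_neg (by omega)
    have hpow : c₃ (w 0 ^ p) = 0 := by rw [aux_pow hc₃, hw30, mul_zero]
    have hA : c₃ ((w 0)⁻¹ * x⁻¹ * w 0 * x) = 0 := comm_zero hc₃ hw30 hx₃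
    rw [hpow, hA, mul_zero, add_zero, zero_add] at E0
    have hP := unit_cancel E0.symm
    have hfk : c₃ ((w (2 * k + 1))⁻¹ * (w (2 * k + 2))⁻¹ * w (2 * k + 1) * w (2 * k + 2)) = 0 := by
      refine aux_prod_single hc₃
        (fun k => (w (2 * k + 1))⁻¹ * (w (2 * k + 2))⁻¹ * w (2 * k + 1) * w (2 * k + 2))
        (d / 2) k (by omega) (fun j hj hjk => comm_zero hc₃ ?_ ?_) hP <;>
        · rw [hw₃ _ (by omega)]
          exact if_neg (by omega)
    have e := aux_comm hc₃ (w (2 * k + 1)) (w (2 * k + 2))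
    have h1 : c₃ (w (2 * k + 1)) = 0 := by
      rw [hw₃ _ (by omega)]; exact if_neg (by omega)
    have h2 : c₃ (w (2 * k + 2)) = 1 := by
      rw [hw₃ _ (by omega)]; exact if_pos rfl
    rw [hfk, h1, h2] at e
    have : ((θ (w (2 * k + 1)) : ℤ_[p]ˣ) : ℤ_[p]) = 1 := by linear_combination -e
    rw [hik]
    exact Units.val_eq_one.mp this

/-- Let `p` be an odd prime and `G` a pro-`p` group with presentation
`G = ⟨x, y₀, …, y_{d₁}, z₀, …, z_{d₂} ∣ r₁ = r₂ = 1⟩`, where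
`r₁ = y₀^p [y₀,x][y₁,y₂]⋯[y_{d₁-1},y_{d₁}]`, `r₂ = z₀^p [z₀,x][z₁,z₂]⋯[z_{d₂-1},z_{d₂}]`
(commutator convention `[g,h] = g⁻¹h⁻¹gh`), with `d₁, d₂` nonnegative even integers.
If `θ : G → 1+pℤₚ` is a homomorphism such that for every choice of values on the generators
there exists a `θ`-twisted 1-cocycle `c : G → ℤₚ(θ)` taking those values, then necessarily
`θ(x⁻¹) = 1-p` and `θ(yᵢ) = θ(zⱼ) = 1` for all `i, j`. -/
theorem stmt15 (p : ℕ) [Fact p.Prime] (hp2 : p ≠ 2)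
    (d₁ d₂ : ℕ) (hd₁ : Even d₁) (hd₂ : Even d₂)
    {G : Type*} [Group G] (x : G) (y z : ℕ → G)
    (hgen : Subgroup.closure ({x} ∪ (y '' Set.Iic d₁) ∪ (z '' Set.Iic d₂)) = ⊤)
    (hr₁ : (y 0) ^ p * ((y 0)⁻¹ * x⁻¹ * y 0 * x) *
      (((List.range (d₁ / 2)).map (fun k =>
        (y (2 * k + 1))⁻¹ * (y (2 * k + 2))⁻¹ * y (2 * k + 1) * y (2 * k + 2))).prod) = 1)
    (hr₂ : (z 0) ^ p * ((z 0)⁻¹ * x⁻¹ * z 0 * x) *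
      (((List.range (d₂ / 2)).map (fun k =>
        (z (2 * k + 1))⁻¹ * (z (2 * k + 2))⁻¹ * z (2 * k + 1) * z (2 * k + 2))).prod) = 1)
    (θ : G →* ℤ_[p]ˣ)
    (hθ : ∀ g : G, (p : ℤ_[p]) ∣ ((θ g : ℤ_[p]) - 1))
    (hco : ∀ (a : ℤ_[p]) (b c' : ℕ → ℤ_[p]),
      ∃ co : G → ℤ_[p],
        (∀ g₁ g₂ : G, co (g₁ * g₂) = co g₁ + (θ g₁ : ℤ_[p]) * co g₂) ∧
        co x = a ∧ (∀ i ≤ d₁, co (y i) = b i) ∧ (∀ j ≤ d₂, co (z j) = c' j)) :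
    ((θ x⁻¹ : ℤ_[p]) = 1 - p) ∧ (∀ i ≤ d₁, θ (y i) = 1) ∧ (∀ j ≤ d₂, θ (z j) = 1) := by
  have H₁ := main_lemma d₁ hd₁ x y hr₁ θ (fun a b => by
    obtain ⟨co, hcc, hx, hy, hz'⟩ := hco a b (fun _ => 0)
    exact ⟨co, hcc, hx, hy⟩)
  have H₂ := main_lemma d₂ hd₂ x z hr₂ θ (fun a c => by
    obtain ⟨co, hcc, hx, hy', hz'⟩ := hco a (fun _ => 0) c
    exact ⟨co, hcc, hx, hz'⟩)
  exact ⟨H₁.1, H₁.2, H₂.2⟩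
end
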